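/- arXiv:1801.02162 — 2 statements merged into one kernel-verified Lean document; each statement's English description precedes it below -/
import Mathlib

section
/- Let P be a convex polygon and ω ∈ (0, π). For a vertex v of P with interior angle α(v), v coincides with the apex of some minimal ω-wedge of P (i.e., v lies on the ω-cloud of P) if and only if α(v) ≤ ω. -/
open EuclideanGeometry Real Set
open scoped Classical

noncomputable section

abbrev Plane := EuclideanSpace ℝ (Fin 2)

/-- The unit vector in direction `θ`. -/
def unitVec (θ : ℝ) : Plane := (WithLp.equiv 2 (Fin 2 → ℝ)).symm ![Real.cos θ, Real.sin θ]

/-- The closed ray from `x` in direction `d`. -/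
def ray (x d : Plane) : Set Plane := {y | ∃ t : ℝ, 0 ≤ t ∧ y = x + t • d}

/-- The closed wedge with apex `x` bounded by the rays in directions `d₁` and `d₂`. -/
def wedgeSet (x d₁ d₂ : Plane) : Set Plane :=
  {y | ∃ s t : ℝ, 0 ≤ s ∧ 0 ≤ t ∧ y = x + s • d₁ + t • d₂}

/-- The wedge with apex `x`, arm directions `d₁`, `d₂` (unit vectors at angle `ω`),
is a minimal `ω`-wedge for `P`: it contains `P` and both arms touch `P`. -/
def IsMinWedge (P : Set Plane) (ω : ℝ) (x d₁ d₂ : Plane) : Prop :=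
  ‖d₁‖ = 1 ∧ ‖d₂‖ = 1 ∧ InnerProductGeometry.angle d₁ d₂ = ω ∧
  P ⊆ wedgeSet x d₁ d₂ ∧ (P ∩ ray x d₁).Nonempty ∧ (P ∩ ray x d₂).Nonempty

/-- The `ω`-cloud of `P`: the locus of apices of all minimal `ω`-wedges. -/
def omegaCloud (P : Set Plane) (ω : ℝ) : Set Plane := {x | ∃ d₁ d₂, IsMinWedge P ω x d₁ d₂}

/-- `V` is the vertex set of a convex polygon: at least 3 points, in strictly convex position. -/
def IsConvexPolygon (V : Finset Plane) : Prop :=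
  3 ≤ V.card ∧ ∀ v ∈ V, v ∉ convexHull ℝ ((V.erase v : Finset Plane) : Set Plane)

/-- The interior angle of a convex body `P` at a boundary point `v`, defined as the
supremum of angles `∠ a v b` over `a, b ∈ P \ {v}`. -/
def interiorAngle (P : Set Plane) (v : Plane) : ℝ :=
  sSup {θ : ℝ | ∃ a ∈ P, ∃ b ∈ P, a ≠ v ∧ b ≠ v ∧ θ = EuclideanGeometry.angle a v b}

/-- A circular arc, given by center, radius, starting angle and angular extent. -/
structure CircArc where
  center : Plane
  radius : ℝ
  start : ℝ
  delta : ℝ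

/-- The (closed) point set of a circular arc. -/
def CircArc.points (A : CircArc) : Set Plane :=
  {p | ∃ θ ∈ Set.Icc A.start (A.start + A.delta), p = A.center + A.radius • unitVec θ}

/-- The relative interior of a circular arc. -/
def CircArc.intPoints (A : CircArc) : Set Plane :=
  {p | ∃ θ ∈ Set.Ioo A.start (A.start + A.delta), p = A.center + A.radius • unitVec θ}

/-- The start point of an arc when it is traversed clockwise. -/
def CircArc.cwStart (A : CircArc) : Plane := A.center + A.radius • unitVec (A.start + A.delta)

/-- The end point of an arc when it is traversed clockwise. -/
def CircArc.cwEnd (A : CircArc) : Plane := A.center + A.radius • unitVec A.start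

/-- The set of (bisector) directions of minimal `ω`-wedges of `P` with apex `x`. -/
def wedgeDirs (P : Set Plane) (ω : ℝ) (x : Plane) : Set Plane :=
  {d | ∃ d₁ d₂, IsMinWedge P ω x d₁ d₂ ∧ d = (‖d₁ + d₂‖)⁻¹ • (d₁ + d₂)}

/-- On every interior point of the arc `A`, the minimal `ω`-wedge of `P` touches `P`
at `p` (with one arm) and `q` (with the other arm). -/
def ContactPair (P : Set Plane) (ω : ℝ) (A : CircArc) (p q : Plane) : Prop :=
  ∀ x ∈ A.intPoints, ∃ d₁ d₂, IsMinWedge P ω x d₁ d₂ ∧ p ∈ ray x d₁ ∧ q ∈ ray x d₂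

/-! If `v` is the apex of a wedge containing `P`, then `∠ a v b ≤ ω` for all `a, b ∈ P`: for
nonzero `u, w` in the cone spanned by `d₁, d₂`, the triangle inequalities for angles through `d₁`
and through `d₂` add up to `2 ∠(u, w) ≤ 2 ∠(d₁, d₂)`, since `d₁, u, d₂` and `d₁, w, d₂` are
equality cases.

Conversely, a line separates `v` from the other vertices, so the arguments of the vectors
`w - v` (measured from the normal of that line) lie in `(-π/2, π/2)` and their differences are
the angles `∠ w v w' ≤ α(v) ≤ ω`. The wedge of opening `ω` whose first arm has the smallest of
these arguments then has every `w - v` between its arms, and the equality case of the triangle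
inequality for angles puts it in the cone spanned by the arms. -/

open scoped RealInnerProductSpace NNReal
open InnerProductGeometry

lemma mem_wedgeSet_iff {x y d₁ d₂ : Plane} :
    y ∈ wedgeSet x d₁ d₂ ↔ y - x ∈ Submodule.span ℝ≥0 {d₁, d₂} := by
  rw [Submodule.mem_span_pair]
  constructor
  · rintro ⟨s, t, hs, ht, rfl⟩
    lift s to ℝ≥0 using hs
    lift t to ℝ≥0 using ht
    exact ⟨s, t, by simp only [NNReal.smul_def]; abel⟩
  · rintro ⟨s, t, h⟩
    exact ⟨s, t, s.2, t.2, by rw [add_assoc, ← NNReal.smul_def, ← NNReal.smul_def, h]; abel⟩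

lemma convex_wedgeSet (x d₁ d₂ : Plane) : Convex ℝ (wedgeSet x d₁ d₂) := by
  rintro p ⟨s₁, t₁, hs₁, ht₁, rfl⟩ q ⟨s₂, t₂, hs₂, ht₂, rfl⟩ a b ha hb hab
  refine ⟨a * s₁ + b * s₂, a * t₁ + b * t₂, by positivity, by positivity, ?_⟩
  match_scalars <;> first | ring1 | linarith

lemma self_mem_ray (x d : Plane) : x ∈ ray x d := ⟨0, le_rfl, by simp⟩

lemma InnerProductGeometry.angle_le_angle_of_mem_span_pair {V : Type*} [NormedAddCommGroup V]
    [InnerProductSpace ℝ V] {x y u w : V} (hu : u ≠ 0) (hw : w ≠ 0)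
    (hu' : u ∈ Submodule.span ℝ≥0 {x, y}) (hw' : w ∈ Submodule.span ℝ≥0 {x, y}) :
    angle u w ≤ angle x y := by
  have hu_between := angle_eq_angle_add_add_angle_add_of_mem_span hu hu'
  have hw_between := angle_eq_angle_add_add_angle_add_of_mem_span hw hw'
  have hvia_x := angle_le_angle_add_angle u x w
  have hvia_y := angle_le_angle_add_angle u y w
  rw [angle_comm u x] at hvia_x
  rw [angle_comm y w] at hvia_y
  linarith

lemma interiorAngle_le_angle_of_subset_wedgeSet {P : Set Plane} {v d₁ d₂ : Plane}
    (h : P ⊆ wedgeSet v d₁ d₂) : interiorAngle P v ≤ InnerProductGeometry.angle d₁ d₂ := by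
  refine Real.sSup_le ?_ (angle_nonneg _ _)
  rintro θ ⟨a, ha, b, hb, hav, hbv, rfl⟩
  exact angle_le_angle_of_mem_span_pair (sub_ne_zero.2 hav) (sub_ne_zero.2 hbv)
    (mem_wedgeSet_iff.1 (h ha)) (mem_wedgeSet_iff.1 (h hb))

lemma angle_le_interiorAngle {P : Set Plane} {v a b : Plane} (ha : a ∈ P) (hb : b ∈ P)
    (hav : a ≠ v) (hbv : b ≠ v) : ∠ a v b ≤ interiorAngle P v :=
  le_csSup ⟨π, by rintro θ ⟨-, -, -, -, -, -, rfl⟩; exact EuclideanGeometry.angle_le_pi _ _ _⟩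
    ⟨a, ha, b, hb, hav, hbv, rfl⟩

lemma exists_inner_lt_of_notMem_convexHull {E : Type*} [NormedAddCommGroup E]
    [InnerProductSpace ℝ E] [CompleteSpace E] {S : Finset E} {v : E}
    (hv : v ∉ convexHull ℝ (S : Set E)) : ∃ n : E, ∀ w ∈ S, ⟪n, v⟫ < ⟪n, w⟫ := by
  obtain ⟨f, u, hfv, hfS⟩ := geometric_hahn_banach_point_closed (convex_convexHull ℝ _)
    (S.finite_toSet.isCompact_convexHull (𝕜 := ℝ)).isClosed hv
  refine ⟨(InnerProductSpace.toDual ℝ E).symm f, fun w hw => ?_⟩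
  simp only [InnerProductSpace.toDual_symm_apply]
  exact hfv.trans (hfS w (subset_convexHull ℝ _ hw))

lemma Complex.angle_mul_exp_mul_exp {k : ℂ} (hk : k ≠ 0) {r s x y : ℝ} (hr : 0 < r) (hs : 0 < s)
    (hxy : x - y ∈ Ioc (-π) π) :
    InnerProductGeometry.angle (r * Complex.exp (x * Complex.I) * k)
      (s * Complex.exp (y * Complex.I) * k) = |x - y| := by
  rw [Complex.angle_mul_right hk, ← Complex.real_smul (x := r), ← Complex.real_smul (x := s),
    angle_smul_left_of_pos _ _ hr, angle_smul_right_of_pos _ _ hs, Complex.angle_exp_exp,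
    (toIocMod_eq_self _).2 (by rwa [show -π + 2 * π = π by ring])]

lemma Complex.exists_angle_add_angle_eq {W : Finset ℂ} (hW : W.Nonempty) {a : ℂ}
    (ha : ∀ z ∈ W, 0 < ⟪a, z⟫) {ω : ℝ} (hω : ω < π)
    (hang : ∀ z ∈ W, ∀ z' ∈ W, InnerProductGeometry.angle z z' ≤ ω) :
    ∃ d₁ d₂ : ℂ, ‖d₁‖ = 1 ∧ ‖d₂‖ = 1 ∧ InnerProductGeometry.angle d₁ d₂ = ω ∧
      ∀ z ∈ W, InnerProductGeometry.angle d₁ z + InnerProductGeometry.angle z d₂ = ω := by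
  set k := (starRingEnd ℂ) a
  have hre : ∀ z ∈ W, 0 < (z * k).re := fun z hz => Complex.inner a z ▸ ha z hz
  have hk : k ≠ 0 := by
    obtain ⟨z, hz⟩ := hW
    rintro hk
    simpa [hk] using hre z hz
  set β : ℂ → ℝ := fun z => (z * k).arg
  have hβ : ∀ z ∈ W, |β z| < π / 2 := fun z hz =>
    Complex.abs_arg_lt_pi_div_two_iff.2 (Or.inl (hre z hz))
  have hpos : ∀ z ∈ W, 0 < ‖z * k‖ := fun z hz =>
    norm_pos_iff.2 fun h => by simpa [h] using hre z hz
  have hpolar : ∀ z, z = ‖z * k‖ * Complex.exp (β z * Complex.I) * k⁻¹ := fun z => by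
    rw [Complex.norm_mul_exp_arg_mul_I, mul_inv_cancel_right₀ hk]
  obtain ⟨z₀, hz₀, hmin⟩ := W.exists_min_image β hW
  have hω₀ : 0 ≤ ω := (InnerProductGeometry.angle_nonneg _ _).trans (hang z₀ hz₀ z₀ hz₀)
  have hd : ∀ θ : ℝ, ‖(‖k‖ : ℂ) * Complex.exp (θ * Complex.I) * k⁻¹‖ = 1 := fun θ => by
    simp [hk]
  have hk' : k⁻¹ ≠ 0 := inv_ne_zero hk
  refine ⟨_, _, hd (β z₀), hd (β z₀ + ω), ?_, fun z hz => ?_⟩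
  · rw [Complex.angle_mul_exp_mul_exp hk' (norm_pos_iff.2 hk) (norm_pos_iff.2 hk)
      (by constructor <;> linarith), show β z₀ - (β z₀ + ω) = -ω by ring, abs_neg,
      abs_of_nonneg hω₀]
  have hβz := abs_lt.1 (hβ z hz)
  have hβz₀ := abs_lt.1 (hβ z₀ hz₀)
  have hzz₀ := Complex.angle_mul_exp_mul_exp hk' (hpos z hz) (hpos z₀ hz₀)
    (x := β z) (y := β z₀) (by constructor <;> linarith)
  rw [← hpolar, ← hpolar] at hzz₀
  have hle : β z - β z₀ ≤ ω := (le_abs_self _).trans (hzz₀ ▸ hang z hz z₀ hz₀)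
  have hge := hmin z hz
  have h₁ := Complex.angle_mul_exp_mul_exp hk' (norm_pos_iff.2 hk) (hpos z hz)
    (x := β z₀) (y := β z) (by constructor <;> linarith)
  have h₂ := Complex.angle_mul_exp_mul_exp hk' (hpos z hz) (norm_pos_iff.2 hk)
    (x := β z) (y := β z₀ + ω) (by constructor <;> linarith)
  rw [← hpolar] at h₁ h₂
  rw [h₁, h₂, abs_of_nonpos (by linarith), abs_of_nonpos (by linarith)]
  ring

lemma exists_cone_of_angle_le {W : Finset Plane} (hW : W.Nonempty) {n : Plane}
    (hn : ∀ u ∈ W, 0 < ⟪n, u⟫) {ω : ℝ} (hω : ω < π)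
    (hang : ∀ u ∈ W, ∀ u' ∈ W, InnerProductGeometry.angle u u' ≤ ω) :
    ∃ d₁ d₂ : Plane, ‖d₁‖ = 1 ∧ ‖d₂‖ = 1 ∧ InnerProductGeometry.angle d₁ d₂ = ω ∧
      ∀ u ∈ W, u ∈ Submodule.span ℝ≥0 {d₁, d₂} := by
  let e : Plane ≃ₗᵢ[ℝ] ℂ := Complex.orthonormalBasisOneI.repr.symm
  have he (x y : Plane) : InnerProductGeometry.angle (e x) (e y) = InnerProductGeometry.angle x y :=
    e.toLinearIsometry.angle_map x y
  obtain ⟨d₁, d₂, h₁, h₂, h₁₂, hsum⟩ := Complex.exists_angle_add_angle_eq (hW.image e)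
    (a := e n) (Finset.forall_mem_image.2 fun u hu => (e.inner_map_map n u).symm ▸ hn u hu) hω
    (Finset.forall_mem_image.2 fun u hu => Finset.forall_mem_image.2 fun u' hu' =>
      (he u u').symm ▸ hang u hu u' hu')
  have he' (x : ℂ) (y : Plane) :
      InnerProductGeometry.angle (e.symm x) y = InnerProductGeometry.angle x (e y) := by
    rw [← he, e.apply_symm_apply]
  refine ⟨e.symm d₁, e.symm d₂, by simpa, by simpa, by rw [he', e.apply_symm_apply, h₁₂],
    fun u hu => ?_⟩
  have hu0 : u ≠ 0 := by
    rintro rfl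
    simpa using hn 0 hu
  refine ((angle_eq_angle_add_angle_iff hu0).1 ?_).resolve_left ?_
  · rw [InnerProductGeometry.angle_comm u, he', he', he', e.apply_symm_apply,
      InnerProductGeometry.angle_comm d₂, h₁₂]
    exact (hsum (e u) (Finset.mem_image_of_mem e hu)).symm
  · rw [he', e.apply_symm_apply, h₁₂]
    exact hω.ne

/-- A vertex `v` of a convex polygon lies on the `ω`-cloud (i.e. is the apex of some
minimal `ω`-wedge) if and only if its interior angle is at most `ω`. -/
theorem stmt_3 (V : Finset Plane) (hV : IsConvexPolygon V) (ω : ℝ) (hω : ω ∈ Set.Ioo 0 π)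
    (v : Plane) (hv : v ∈ V) :
    v ∈ omegaCloud (convexHull ℝ (V : Set Plane)) ω ↔
      interiorAngle (convexHull ℝ (V : Set Plane)) v ≤ ω := by
  refine ⟨fun ⟨d₁, d₂, _, _, hang, hsub, _⟩ =>
    hang ▸ interiorAngle_le_angle_of_subset_wedgeSet hsub, fun hα => ?_⟩
  have hVP : (V : Set Plane) ⊆ convexHull ℝ V := subset_convexHull ℝ _
  obtain ⟨n, hn⟩ := exists_inner_lt_of_notMem_convexHull (hV.2 v hv)
  have hW : ((V.erase v).image (· - v)).Nonempty := by
    rw [Finset.image_nonempty, ← Finset.card_pos, Finset.card_erase_of_mem hv]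
    have := hV.1
    omega
  obtain ⟨d₁, d₂, h₁, h₂, h₁₂, hcone⟩ := exists_cone_of_angle_le hW (n := n)
    (Finset.forall_mem_image.2 fun w hw => by rw [inner_sub_right]; linarith [hn w hw]) hω.2
    (Finset.forall_mem_image.2 fun w hw => Finset.forall_mem_image.2 fun w' hw' =>
      (angle_le_interiorAngle (hVP (Finset.mem_of_mem_erase hw))
        (hVP (Finset.mem_of_mem_erase hw')) (Finset.ne_of_mem_erase hw)
        (Finset.ne_of_mem_erase hw')).trans hα)
  refine ⟨d₁, d₂, h₁, h₂, h₁₂, convexHull_min (fun w hw => ?_) (convex_wedgeSet v d₁ d₂),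
    ⟨v, hVP hv, self_mem_ray v d₁⟩, ⟨v, hVP hv, self_mem_ray v d₂⟩⟩
  rw [mem_wedgeSet_iff]
  rcases eq_or_ne w v with rfl | hwv
  · rw [sub_self]
    exact zero_mem _
  · exact hcone _ (Finset.mem_image_of_mem _ (Finset.mem_erase.2 ⟨hwv, hw⟩))
end
end

section
/- Hidden pivots can exist only when ω ≥ π/2: if ω < π/2, then no two consecutive arcs of the ω-cloud of a convex polygon lie on the same supporting circle. -/
open EuclideanGeometry Real Set
open scoped Classical

noncomputable section

/-!
Both arcs lie on the circle `θ ↦ c + r • unitVec θ`. Every point `x` of the arc `A` sees its contact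
pair `p, q` along the two arms of a wedge of angle `ω`, so the polynomial defect
`⟪p - x, q - x⟫² - cos² ω ‖p - x‖² ‖q - x‖²` vanishes on `A`; being analytic in `θ`, it vanishes on
the whole circle, in particular on `B`. At a point of `B` the minimal wedge is acute, has its arms
through `p'` and `q'`, and contains `p` and `q`; two vectors inside an acute wedge whose angle has
the same cosine squared as the wedge lie on its two arms. Hence infinitely many points of the circle
are collinear with `p` and one of `p'`, `q'`, and a line meets a circle at most twice.
-/

open scoped RealInnerProductSpace

@[simp] lemma unitVec_apply_zero (θ : ℝ) : unitVec θ 0 = Real.cos θ := rfl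

@[simp] lemma unitVec_apply_one (θ : ℝ) : unitVec θ 1 = Real.sin θ := rfl

lemma norm_unitVec (θ : ℝ) : ‖unitVec θ‖ = 1 := by
  rw [EuclideanSpace.norm_eq, Fin.sum_univ_two, unitVec_apply_zero, unitVec_apply_one]
  simp

lemma unitVec_injOn_Ioo (s : ℝ) : InjOn unitVec (Ioo s (s + π)) := by
  intro θ hθ θ' hθ' h
  have hcos : Real.cos θ = Real.cos θ' := congrArg (· 0) h
  have hsin : Real.sin θ = Real.sin θ' := congrArg (· 1) h
  have hshift : Real.cos (θ - s) = Real.cos (θ' - s) := by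
    rw [Real.cos_sub, Real.cos_sub, hcos, hsin]
  have := Real.injOn_cos ⟨by linarith [hθ.1], by linarith [hθ.2]⟩
    ⟨by linarith [hθ'.1], by linarith [hθ'.2]⟩ hshift
  linarith

lemma CircArc.intPoints_infinite {A : CircArc} (hr : 0 < A.radius) (hδ : 0 < A.delta) :
    A.intPoints.Infinite := by
  have hinj : InjOn (fun θ => A.center + A.radius • unitVec θ)
      (Ioo A.start (A.start + min A.delta π)) := fun θ hθ θ' hθ' h =>
    unitVec_injOn_Ioo A.start (Ioo_subset_Ioo_right (by simp) hθ)
      (Ioo_subset_Ioo_right (by simp) hθ') (smul_right_injective Plane hr.ne' (add_left_cancel h))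
  refine Infinite.mono ?_ ((Ioo_infinite (by simp [hδ, pi_pos])).image hinj)
  rintro _ ⟨θ, hθ, rfl⟩
  exact ⟨θ, Ioo_subset_Ioo_right (by simp) hθ, rfl⟩

lemma CircArc.intPoints_subset_sphere {A : CircArc} (hr : 0 ≤ A.radius) :
    A.intPoints ⊆ Metric.sphere A.center A.radius := by
  rintro _ ⟨θ, -, rfl⟩
  simp [norm_smul, norm_unitVec, abs_of_nonneg hr]

/-- Vanishes exactly when `cos² ∠(u, v) = k²` (for `u, v ≠ 0`); unlike the angle itself it is a
polynomial in the coordinates, hence analytic along a circle. -/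
def cosSqDefect (k : ℝ) (u v : Plane) : ℝ := ⟪u, v⟫ ^ 2 - k ^ 2 * (⟪u, u⟫ * ⟪v, v⟫)

lemma cosSqDefect_smul_smul {d₁ d₂ : Plane} (h₁ : ‖d₁‖ = 1) (h₂ : ‖d₂‖ = 1) (t s : ℝ) :
    cosSqDefect ⟪d₁, d₂⟫ (t • d₁) (s • d₂) = 0 := by
  simp only [cosSqDefect, real_inner_smul_left, real_inner_smul_right, real_inner_self_eq_norm_sq,
    norm_smul, mul_pow, Real.norm_eq_abs, sq_abs, h₁, h₂]
  ring

lemma analyticAt_cosSqDefect_circle (k : ℝ) (p q c : Plane) (r θ₀ : ℝ) :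
    AnalyticAt ℝ
      (fun θ => cosSqDefect k (p - (c + r • unitVec θ)) (q - (c + r • unitVec θ))) θ₀ := by
  simp only [cosSqDefect, PiLp.inner_apply, Fin.sum_univ_two, PiLp.sub_apply, PiLp.add_apply,
    PiLp.smul_apply, unitVec_apply_zero, unitVec_apply_one, RCLike.inner_apply, conj_trivial,
    smul_eq_mul]
  fun_prop

lemma inner_eq_cos_of_angle_eq {d₁ d₂ : Plane} {ω : ℝ} (h₁ : ‖d₁‖ = 1) (h₂ : ‖d₂‖ = 1)
    (hω : InnerProductGeometry.angle d₁ d₂ = ω) : ⟪d₁, d₂⟫ = Real.cos ω := by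
  rw [← hω, InnerProductGeometry.cos_angle, h₁, h₂, mul_one, div_one]

lemma ContactPair.cosSqDefect_eq_zero {P : Set Plane} {ω : ℝ} {A : CircArc} {p q : Plane}
    (hA : ContactPair P ω A p q) (hδ : 0 < A.delta) (θ : ℝ) :
    cosSqDefect (Real.cos ω) (p - (A.center + A.radius • unitVec θ))
      (q - (A.center + A.radius • unitVec θ)) = 0 := by
  set F := fun θ => cosSqDefect (Real.cos ω) (p - (A.center + A.radius • unitVec θ))
      (q - (A.center + A.radius • unitVec θ))
  have hmid : A.start + A.delta / 2 ∈ Ioo A.start (A.start + A.delta) :=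
    ⟨by linarith, by linarith⟩
  have hlocal : F =ᶠ[nhds (A.start + A.delta / 2)] 0 := by
    filter_upwards [isOpen_Ioo.mem_nhds hmid] with θ hθ
    obtain ⟨d₁, d₂, ⟨h₁, h₂, hang, -⟩, ⟨t, -, hp⟩, ⟨s, -, hq⟩⟩ := hA _ ⟨θ, hθ, rfl⟩
    have := cosSqDefect_smul_smul h₁ h₂ t s
    rw [inner_eq_cos_of_angle_eq h₁ h₂ hang, ← add_sub_cancel_left (A.center + _) (t • d₁),
      ← add_sub_cancel_left (A.center + _) (s • d₂), ← hp, ← hq] at this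
    exact this
  have hF : AnalyticOnNhd ℝ F univ := fun θ₀ _ => analyticAt_cosSqDefect_circle _ p q _ _ θ₀
  exact hF.eqOn_zero_of_preconnected_of_eventuallyEq_zero isPreconnected_univ (mem_univ _) hlocal
    (mem_univ θ)

lemma wedge_coeffs_eq_zero {a b c e k : ℝ} (ha : 0 ≤ a) (hb : 0 ≤ b) (hc : 0 ≤ c) (he : 0 ≤ e)
    (hk : 0 < k) (hk' : k < 1) (hab : a ≠ 0 ∨ b ≠ 0) (hce : c ≠ 0 ∨ e ≠ 0)
    (h : (a * c + b * e + (a * e + b * c) * k) ^ 2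
      = k ^ 2 * ((a ^ 2 + b ^ 2 + 2 * a * b * k) * (c ^ 2 + e ^ 2 + 2 * c * e * k))) :
    (b = 0 ∧ c = 0) ∨ (a = 0 ∧ e = 0) := by
  set I := a * c + b * e + (a * e + b * c) * k
  -- Gram's identity `‖u‖²‖v‖² = ⟪u, v⟫² + (1 - k²) det²` for `u = a d₁ + b d₂`, `v = c d₁ + e d₂`.
  have hgram : (a ^ 2 + b ^ 2 + 2 * a * b * k) * (c ^ 2 + e ^ 2 + 2 * c * e * k)
      = I ^ 2 + (1 - k ^ 2) * (a * e - b * c) ^ 2 := by ring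
  have hI : I ^ 2 = k ^ 2 * (a * e - b * c) ^ 2 := by
    have h1k : 0 < 1 - k ^ 2 := by nlinarith
    rw [hgram] at h
    have : (1 - k ^ 2) * (I ^ 2 - k ^ 2 * (a * e - b * c) ^ 2) = 0 := by linear_combination h
    linarith [(mul_eq_zero.1 this).resolve_left h1k.ne']
  have hIle : I ≤ k * (a * e + b * c) := by
    nlinarith [mul_nonneg (mul_nonneg ha he) (mul_nonneg hb hc),
      mul_nonneg (mul_nonneg ha he) hk.le, mul_nonneg (mul_nonneg hb hc) hk.le]
  have hac : a * c = 0 := by nlinarith [mul_nonneg ha hc, mul_nonneg hb he]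
  have hbe : b * e = 0 := by nlinarith [mul_nonneg ha hc, mul_nonneg hb he]
  rcases mul_eq_zero.1 hac with ha0 | hc0
  · exact Or.inr ⟨ha0, (mul_eq_zero.1 hbe).resolve_left (hab.resolve_left (not_not.2 ha0))⟩
  · refine Or.inl ⟨(mul_eq_zero.1 hbe).resolve_right fun he0 => ?_, hc0⟩
    exact hce.elim (· hc0) (· he0)

lemma mem_ray_of_cosSqDefect_eq_zero {x d₁ d₂ p q : Plane} (h₁ : ‖d₁‖ = 1) (h₂ : ‖d₂‖ = 1)
    (hk : 0 < ⟪d₁, d₂⟫) (hk' : ⟪d₁, d₂⟫ < 1) (hp : p ∈ wedgeSet x d₁ d₂)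
    (hq : q ∈ wedgeSet x d₁ d₂) (hxp : x ≠ p) (hxq : x ≠ q)
    (h : cosSqDefect ⟪d₁, d₂⟫ (p - x) (q - x) = 0) :
    (p ∈ ray x d₁ ∧ q ∈ ray x d₂) ∨ (p ∈ ray x d₂ ∧ q ∈ ray x d₁) := by
  obtain ⟨a, b, ha, hb, rfl⟩ := hp
  obtain ⟨c, e, hc, he, rfl⟩ := hq
  have hab : a ≠ 0 ∨ b ≠ 0 := by
    by_contra! h0; exact hxp (by simp [h0.1, h0.2])
  have hce : c ≠ 0 ∨ e ≠ 0 := by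
    by_contra! h0; exact hxq (by simp [h0.1, h0.2])
  have h₁₁ : ⟪d₁, d₁⟫ = 1 := by rw [real_inner_self_eq_norm_sq, h₁, one_pow]
  have h₂₂ : ⟪d₂, d₂⟫ = 1 := by rw [real_inner_self_eq_norm_sq, h₂, one_pow]
  rw [add_assoc, add_sub_cancel_left, add_assoc, add_sub_cancel_left] at h
  simp only [cosSqDefect, inner_add_left, inner_add_right,
    real_inner_smul_left, real_inner_smul_right, h₁₁, h₂₂, real_inner_comm d₁ d₂] at h
  rcases wedge_coeffs_eq_zero ha hb hc he hk hk' hab hce (by linear_combination h)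
    with ⟨rfl, rfl⟩ | ⟨rfl, rfl⟩
  · exact Or.inl ⟨⟨a, ha, by simp⟩, ⟨e, he, by simp⟩⟩
  · exact Or.inr ⟨⟨b, hb, by simp⟩, ⟨c, hc, by simp⟩⟩

lemma collinear_of_mem_ray {x d p p' : Plane} (hp : p ∈ ray x d) (hp' : p' ∈ ray x d) :
    Collinear ℝ {x, p, p'} := by
  obtain ⟨t, -, rfl⟩ := hp
  obtain ⟨t', -, rfl⟩ := hp'
  refine (collinear_iff_of_mem (mem_insert x _)).2 ⟨d, ?_⟩
  simp only [mem_insert_iff, mem_singleton_iff, vadd_eq_add]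
  rintro y (rfl | rfl | rfl)
  exacts [⟨0, by simp⟩, ⟨t, add_comm _ _⟩, ⟨t', add_comm _ _⟩]

section Sphere

variable {V Pt : Type*} [NormedAddCommGroup V] [InnerProductSpace ℝ V] [MetricSpace Pt]
  [NormedAddTorsor V Pt]

lemma finite_sphere_inter_affineSpan_pair (c : Pt) (r : ℝ) (p₁ p₂ : Pt) :
    (Metric.sphere c r ∩ line[ℝ, p₁, p₂]).Finite := by
  by_contra hinf
  obtain ⟨t, hts, ht⟩ := Set.Infinite.exists_subset_card_eq hinf 3
  obtain ⟨x, y, z, hxy, hxz, hyz, rfl⟩ := Finset.card_eq_three.1 ht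
  simp only [Finset.coe_insert, Finset.coe_singleton, insert_subset_iff, singleton_subset_iff]
    at hts
  have hcos : Cospherical ({x, y, z} : Set Pt) :=
    ⟨c, r, by simp only [mem_insert_iff, mem_singleton_iff]; rintro w (rfl | rfl | rfl) <;>
      simp_all⟩
  exact affineIndependent_iff_not_collinear_set.1 (hcos.affineIndependent_of_ne hxy hxz hyz)
    (collinear_triple_of_mem_affineSpan_pair hts.1.2 hts.2.1.2 hts.2.2.2)

lemma eq_of_collinear_of_infinite_subset_sphere {c : Pt} {r : ℝ} {S : Set Pt}
    (hS : S.Infinite) (hSc : S ⊆ Metric.sphere c r) {p p' : Pt}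
    (hcol : ∀ x ∈ S, Collinear ℝ {x, p, p'}) : p = p' := by
  by_contra hne
  refine hS ((finite_sphere_inter_affineSpan_pair c r p p').subset fun x hx => ⟨hSc hx, ?_⟩)
  exact (hcol x hx).mem_affineSpan_of_mem_of_ne (by simp) (by simp) (by simp) hne

lemma eq_and_eq_or_eq_and_eq_of_infinite_subset_sphere {c : Pt} {r : ℝ} {S : Set Pt}
    (hS : S.Infinite) (hSc : S ⊆ Metric.sphere c r) {p q p' q' : Pt}
    (hcol : ∀ x ∈ S, (Collinear ℝ {x, p, p'} ∧ Collinear ℝ {x, q, q'}) ∨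
      (Collinear ℝ {x, p, q'} ∧ Collinear ℝ {x, q, p'})) :
    (p = p' ∧ q = q') ∨ (p = q' ∧ q = p') := by
  have hsplit : S ⊆ {x ∈ S | Collinear ℝ {x, p, p'} ∧ Collinear ℝ {x, q, q'}} ∪
      {x ∈ S | Collinear ℝ {x, p, q'} ∧ Collinear ℝ {x, q, p'}} :=
    fun x hx => (hcol x hx).imp (⟨hx, ·⟩) (⟨hx, ·⟩)
  have eq_of_collinear {T : Set Pt} (hT : T.Infinite) (hTS : T ⊆ S) {a b : Pt}
      (hab : ∀ x ∈ T, Collinear ℝ {x, a, b}) : a = b :=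
    eq_of_collinear_of_infinite_subset_sphere hT (hTS.trans hSc) hab
  rcases Set.infinite_union.1 (hS.mono hsplit) with h | h
  · exact Or.inl ⟨eq_of_collinear h (fun x hx => hx.1) fun x hx => hx.2.1,
      eq_of_collinear h (fun x hx => hx.1) fun x hx => hx.2.2⟩
  · exact Or.inr ⟨eq_of_collinear h (fun x hx => hx.1) fun x hx => hx.2.1,
      eq_of_collinear h (fun x hx => hx.1) fun x hx => hx.2.2⟩

end Sphere

lemma ContactPair.collinear_of_cosSqDefect_eq_zero {P : Set Plane} {ω : ℝ} {B : CircArc}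
    {p q p' q' x : Plane} (hB : ContactPair P ω B p' q') (hω : 0 < ω) (hω' : ω < π / 2)
    (hx : x ∈ B.intPoints) (hp : p ∈ P) (hq : q ∈ P) (hxp : x ≠ p) (hxq : x ≠ q)
    (h : cosSqDefect (Real.cos ω) (p - x) (q - x) = 0) :
    (Collinear ℝ {x, p, p'} ∧ Collinear ℝ {x, q, q'}) ∨
      (Collinear ℝ {x, p, q'} ∧ Collinear ℝ {x, q, p'}) := by
  obtain ⟨d₁, d₂, ⟨h₁, h₂, hang, hsub, -⟩, hp', hq'⟩ := hB x hx
  have hk := inner_eq_cos_of_angle_eq h₁ h₂ hang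
  have hcos : 0 < Real.cos ω := Real.cos_pos_of_mem_Ioo ⟨by linarith [pi_pos], hω'⟩
  have hcos' : Real.cos ω < 1 := by
    simpa using Real.cos_lt_cos_of_nonneg_of_le_pi le_rfl (by linarith [pi_pos]) hω
  rcases mem_ray_of_cosSqDefect_eq_zero h₁ h₂ (hk ▸ hcos) (hk ▸ hcos') (hsub hp) (hsub hq)
    hxp hxq (hk ▸ h) with ⟨hpr, hqr⟩ | ⟨hpr, hqr⟩
  · exact Or.inl ⟨collinear_of_mem_ray hpr hp', collinear_of_mem_ray hqr hq'⟩
  · exact Or.inr ⟨collinear_of_mem_ray hpr hq', collinear_of_mem_ray hqr hp'⟩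

theorem stmt_12_general (V : Finset Plane) (ω : ℝ)
    (hω : 0 < ω) (hω' : ω < π / 2) (A B : CircArc)
    (hpropA : 0 < A.radius ∧ 0 < A.delta) (hpropB : 0 < B.radius ∧ 0 < B.delta)
    (p q p' q' : Plane) (hp : p ∈ V) (hq : q ∈ V)
    (hcA : ContactPair (convexHull ℝ (V : Set Plane)) ω A p q)
    (hcB : ContactPair (convexHull ℝ (V : Set Plane)) ω B p' q')
    (hne : ¬((p' = p ∧ q' = q) ∨ (p' = q ∧ q' = p))) :
    ¬(A.center = B.center ∧ A.radius = B.radius) := by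
  rintro ⟨hcc, hrr⟩
  set S := B.intPoints \ {p, q, p', q'}
  have hS : S.Infinite := (B.intPoints_infinite hpropB.1 hpropB.2).sdiff (toFinite _)
  have hSsph : S ⊆ Metric.sphere A.center A.radius :=
    sdiff_subset.trans (hcc ▸ hrr ▸ B.intPoints_subset_sphere hpropB.1.le)
  have hcol : ∀ x ∈ S, (Collinear ℝ {x, p, p'} ∧ Collinear ℝ {x, q, q'}) ∨
      (Collinear ℝ {x, p, q'} ∧ Collinear ℝ {x, q, p'}) := by
    rintro x ⟨hxB, hx⟩
    simp only [mem_insert_iff, mem_singleton_iff, not_or] at hx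
    refine hcB.collinear_of_cosSqDefect_eq_zero hω hω' hxB (subset_convexHull ℝ _ hp)
      (subset_convexHull ℝ _ hq) hx.1 hx.2.1 ?_
    obtain ⟨θ, -, rfl⟩ := hxB
    rw [← hcc, ← hrr]
    exact hcA.cosSqDefect_eq_zero hpropA.2 θ
  rcases eq_and_eq_or_eq_and_eq_of_infinite_subset_sphere hS hSsph hcol with ⟨h₁, h₂⟩ | ⟨h₁, h₂⟩
  exacts [hne (Or.inl ⟨h₁.symm, h₂.symm⟩), hne (Or.inr ⟨h₂.symm, h₁.symm⟩)]

/-- If `ω < π/2`, the `ω`-cloud of a convex polygon has no hidden pivots: two consecutive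
arcs meeting at a pivot (where the contact pair changes) cannot lie on the same supporting
circle. -/
theorem stmt_12 (V : Finset Plane) (hV : IsConvexPolygon V) (ω : ℝ)
    (hω : 0 < ω) (hω' : ω < π / 2) (A B : CircArc)
    (hpropA : 0 < A.radius ∧ 0 < A.delta) (hpropB : 0 < B.radius ∧ 0 < B.delta)
    (hsubA : A.points ⊆ omegaCloud (convexHull ℝ (V : Set Plane)) ω)
    (hsubB : B.points ⊆ omegaCloud (convexHull ℝ (V : Set Plane)) ω)
    (hAB : A.cwEnd = B.cwStart)
    (hdisj : Disjoint A.intPoints B.intPoints)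
    (p q p' q' : Plane) (hp : p ∈ V) (hq : q ∈ V) (hp' : p' ∈ V) (hq' : q' ∈ V)
    (hcA : ContactPair (convexHull ℝ (V : Set Plane)) ω A p q)
    (hcB : ContactPair (convexHull ℝ (V : Set Plane)) ω B p' q')
    (hne : ¬((p' = p ∧ q' = q) ∨ (p' = q ∧ q' = p))) :
    ¬(A.center = B.center ∧ A.radius = B.radius) :=
  stmt_12_general V ω hω hω' A B hpropA hpropB p q p' q' hp hq hcA hcB hne

end
end
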